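/- For q ∈ (0,1) and λ ∈ (0,1), letting q̂ = λq/(1−q+λq), we have (4/3)·(1 − √q̂/(1+√q̂)²) > (4/3)·(1 − √q/(1+√q)²); that is, the nominally equivalent subsidy has strictly larger price of anarchy than the scaled marginal-cost toll. -/
import Mathlib

/-- The nominally equivalent subsidy (heterogeneity ratio q̂ = λq/(1−q+λq))
    has strictly larger PoA than the scaled marginal-cost toll. -/
theorem subsidy_poa_larger_hetero (q lam : ℝ) (hq0 : 0 < q) (hq1 : q < 1)
    (hlam0 : 0 < lam) (hlam1 : lam < 1) :
    (4 / 3) * (1 - Real.sqrt (lam * q / (1 - q + lam * q)) /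
        (1 + Real.sqrt (lam * q / (1 - q + lam * q))) ^ 2)
      > (4 / 3) * (1 - Real.sqrt q / (1 + Real.sqrt q) ^ 2) := by
  have hd : 0 < 1 - q + lam * q := by nlinarith
  set qh := lam * q / (1 - q + lam * q) with hqh
  have hqh0 : 0 ≤ qh := by positivity
  have hqhlt : qh < q := by
    rw [hqh, div_lt_iff₀ hd]
    nlinarith [mul_pos hq0 (mul_pos (sub_pos.mpr hq1) (sub_pos.mpr hlam1))]
  set a := Real.sqrt qh
  set b := Real.sqrt q
  have ha0 : 0 ≤ a := Real.sqrt_nonneg _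
  have hab : a < b := Real.sqrt_lt_sqrt hqh0 hqhlt
  have hb1 : b < 1 := by
    have h := Real.sqrt_lt_sqrt (le_of_lt hq0) hq1
    rwa [Real.sqrt_one] at h
  have h1a : 0 < (1 + a) ^ 2 := by positivity
  have h1b : 0 < (1 + b) ^ 2 := by positivity
  have key : a / (1 + a) ^ 2 < b / (1 + b) ^ 2 := by
    rw [div_lt_div_iff₀ h1a h1b]
    nlinarith [mul_pos (sub_pos.mpr hab) (sub_pos.mpr (show a * b < 1 by nlinarith))]
  nlinarith
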